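/- arXiv:2010.04780 — 9 statements merged into one kernel-verified Lean document; each statement's English description precedes it below -/
import Mathlib

section
/- Let V be a real vector space with a nondegenerate bilinear form g (symmetric or antisymmetric) and let j be a complex structure on V (j² = -Id) compatible with g (i.e. g(jX,jY) = g(X,Y) for all X, Y). Then the set {S ∈ End(V) : Sj + jS = 0 and g(SX,Y) + g(X,SY) = 0 for all X,Y} equals the set {[j,S'] : S' ∈ End(V), g(S'X,Y) + g(X,S'Y) = 0 for all X,Y}. -/
/-- For a finite-dimensional real vector space `V` with a
nondegenerate bilinear form `g` (symmetric or antisymmetric) and a complex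
structure `j` compatible with `g`, the set of `g`-skew endomorphisms
anticommuting with `j` equals the set of commutators `[j, S']` with `S'`
`g`-skew. -/
theorem twistor_vertical_space_eq
    (V : Type*) [AddCommGroup V] [Module ℝ V] [FiniteDimensional ℝ V]
    (g : V →ₗ[ℝ] V →ₗ[ℝ] ℝ)
    (hnd : ∀ X : V, (∀ Y : V, g X Y = 0) → X = 0)
    (hsym : (∀ X Y : V, g X Y = g Y X) ∨ (∀ X Y : V, g X Y = - g Y X))
    (j : Module.End ℝ V) (hj : j * j = -1)
    (hcompat : ∀ X Y : V, g (j X) (j Y) = g X Y) :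
    {S : Module.End ℝ V | S * j + j * S = 0 ∧ ∀ X Y : V, g (S X) Y + g X (S Y) = 0}
      = {T : Module.End ℝ V | ∃ S' : Module.End ℝ V,
          (∀ X Y : V, g (S' X) Y + g X (S' Y) = 0) ∧ T = j * S' - S' * j} := by
  have hjj : ∀ Y : V, j (j Y) = -Y := by
    intro Y
    have := congrArg (fun f : Module.End ℝ V => f Y) hj
    simpa [Module.End.mul_apply] using this
  have hgj : ∀ X Y : V, g (j X) Y = - g X (j Y) := by
    intro X Y
    have h := hcompat X (j Y)
    rw [hjj] at h
    simp only [map_neg] at h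
    linarith
  ext S
  constructor
  · rintro ⟨hanti, hskew⟩
    have hanti' : ∀ X : V, S (j X) = - j (S X) := by
      intro X
      have := congrArg (fun f : Module.End ℝ V => f X) hanti
      simp only [Module.End.mul_apply, LinearMap.add_apply, LinearMap.zero_apply] at this
      exact eq_neg_of_add_eq_zero_left this
    refine ⟨(1/2 : ℝ) • (S * j), ?_, ?_⟩
    · intro X Y
      simp only [LinearMap.smul_apply, Module.End.mul_apply, map_smul, smul_eq_mul,
        LinearMap.map_smul]
      have h1 : g (S (j X)) Y = - g (j X) (S Y) := by
        have := hskew (j X) Y; linarith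
      have h2 : g (j X) (S Y) = - g X (j (S Y)) := hgj X (S Y)
      have h3 : j (S Y) = - S (j Y) := by rw [hanti' Y]; simp
      have h3' : g X (j (S Y)) = - g X (S (j Y)) := by rw [h3]; simp
      linarith
    · have hjS : j * S = -(S * j) := by
        have h := hanti
        rw [add_eq_zero_iff_eq_neg] at h
        rw [h, neg_neg]
      have key : j * ((1/2 : ℝ) • (S * j)) - ((1/2 : ℝ) • (S * j)) * j
          = (1/2 : ℝ) • (j * S * j - S * (j * j)) := by
        rw [mul_smul_comm, smul_mul_assoc, ← smul_sub, mul_assoc, ← mul_assoc, mul_assoc]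
      rw [key, hjS, neg_mul, mul_assoc, hj, mul_neg_one]
      module
  · rintro ⟨S', hskew', rfl⟩
    constructor
    · have : (j * S' - S' * j) * j + j * (j * S' - S' * j)
          = (j * j) * S' - S' * (j * j) := by noncomm_ring
      rw [this, hj]
      simp
    · intro X Y
      simp only [LinearMap.sub_apply, Module.End.mul_apply, map_sub]
      have h1 : g (j (S' X)) Y = - g (S' X) (j Y) := hgj (S' X) Y
      have h2 : g (S' X) (j Y) = - g X (S' (j Y)) := by
        have := hskew' X (j Y); linarith
      have h3 : g (S' (j X)) Y = - g (j X) (S' Y) := by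
        have := hskew' (j X) Y; linarith
      have h4 : g (j X) (S' Y) = - g X (j (S' Y)) := hgj X (S' Y)
      linarith
end

section
/- Let V be a real vector space with complex structure j, acting on bilinear curvature-type maps R : V × V → End(V) by (j·R)(U,W) = j∘R(U,W) - R(jU,W) - R(U,jW) - R(U,W)∘j. Then for the complexified action, the map R ↦ (Id - i j)∘R((Id + i j)·, (Id + i j)·)∘(Id + i j) is, up to scalar, the projection onto the 4i-eigenspace of j·: concretely, if (j·R) = λ R with λ ∈ {0, ±2i, ±4i}, then (Id - i j)∘R((Id + i j)·,(Id + i j)·)∘(Id + i j) = 0 unless λ = 4i. -/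
open Complex

/-- On the complexification, for an antisymmetric curvature-type
map `R` which is an eigenvector of the action
`(j·R)(U,W) = j∘R(U,W) - R(jU,W) - R(U,jW) - R(U,W)∘j` with eigenvalue
`λ ∈ {0, ±2i, ±4i}`, the expression
`(Id - i j) ∘ R((Id + i j)·,(Id + i j)·) ∘ (Id + i j)` vanishes unless `λ = 4i`. -/
theorem projection_onto_4i_eigenspace
    (W : Type*) [AddCommGroup W] [Module ℂ W]
    (j : Module.End ℂ W) (hj : j * j = -1)
    (R : W →ₗ[ℂ] W →ₗ[ℂ] Module.End ℂ W)
    (hanti : ∀ U V : W, R U V = - R V U)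
    (lam : ℂ)
    (hlam : lam ∈ ({0, 2 * Complex.I, -(2 * Complex.I),
        4 * Complex.I, -(4 * Complex.I)} : Set ℂ))
    (heig : ∀ U V : W,
      j * R U V - R (j U) V - R U (j V) - R U V * j = lam • R U V)
    (hne : lam ≠ 4 * Complex.I) :
    ∀ U V : W,
      (1 - Complex.I • j) * R ((1 + Complex.I • j) U) ((1 + Complex.I • j) V)
        * (1 + Complex.I • j) = 0 := by
  intro U V
  have hjj : ∀ x : W, j (j x) = -x := fun x => by
    have := congrArg (fun f : Module.End ℂ W => f x) hj
    simpa [Module.End.mul_apply] using this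
  set P : Module.End ℂ W := 1 + Complex.I • j with hP
  set Q : Module.End ℂ W := 1 - Complex.I • j with hQ
  -- algebraic identities
  have hQj : Q * j = Complex.I • Q := by
    rw [hQ, sub_mul, one_mul, smul_mul_assoc, hj, smul_sub, smul_smul,
      Complex.I_mul_I]
    module
  have hjP : j * P = (-Complex.I) • P := by
    rw [hP, mul_add, mul_one, mul_smul_comm, hj, smul_add, smul_smul]
    have : (-Complex.I) * Complex.I = 1 := by
      rw [neg_mul, Complex.I_mul_I, neg_neg]
    rw [this]
    module
  have hPU : ∀ x : W, j (P x) = (-Complex.I) • P x := fun x => by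
    simp only [hP, LinearMap.add_apply, Module.End.one_apply,
      LinearMap.smul_apply, map_add, map_smul, hjj, smul_add, smul_smul]
    have : (-Complex.I) * Complex.I = 1 := by
      rw [neg_mul, Complex.I_mul_I, neg_neg]
    rw [this]
    module
  set T : Module.End ℂ W := R (P U) (P V) with hTdef
  have h1 : R (j (P U)) (P V) = (-Complex.I) • T := by
    rw [hPU, map_smul, LinearMap.smul_apply, hTdef]
  have h2 : R (P U) (j (P V)) = (-Complex.I) • T := by
    rw [hPU, map_smul, hTdef]
  have hT : j * T - T * j = (lam - 2 * Complex.I) • T := by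
    have hE := heig (P U) (P V)
    rw [h1, h2] at hE
    have hE' : j * T - T * j = lam • T + (-Complex.I) • T + (-Complex.I) • T := by
      rw [← hE]; abel
    rw [hE']
    rw [sub_smul]
    module
  have e1 : Q * (j * T) = Complex.I • (Q * T) := by
    rw [← mul_assoc, hQj, smul_mul_assoc]
  have e2 : (T * j) * P = (-Complex.I) • (T * P) := by
    rw [mul_assoc, hjP, mul_smul_comm]
  have h3 : Q * (j * T - T * j) * P = (lam - 2 * Complex.I) • (Q * T * P) := by
    rw [hT, mul_smul_comm, smul_mul_assoc]
  have h4 : Q * (j * T - T * j) * P = (2 * Complex.I) • (Q * T * P) := by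
    rw [mul_sub, sub_mul, mul_assoc Q (T * j) P, e2, mul_smul_comm, e1,
      smul_mul_assoc, ← mul_assoc]
    module
  have h5 : (lam - 4 * Complex.I) • (Q * T * P) = 0 := by
    have h6 : (lam - 2 * Complex.I) • (Q * T * P) = (2 * Complex.I) • (Q * T * P) :=
      h3.symm.trans h4
    have h7 : (lam - 2 * Complex.I - 2 * Complex.I) • (Q * T * P) = 0 := by
      rw [sub_smul, h6, sub_self]
    have : lam - 4 * Complex.I = lam - 2 * Complex.I - 2 * Complex.I := by ring
    rw [this]
    exact h7
  have hl : lam - 4 * Complex.I ≠ 0 := sub_ne_zero.mpr hne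
  exact (smul_eq_zero.mp h5).resolve_left hl
end

section
/- Let (V,g) be a 2n-dimensional pseudo-Euclidean space, j a compatible complex structure, and S an antisymmetric bilinear form with S(jX,jY) = -S(X,Y). Define ψ_j(S)(X,Y) ∈ End(V) by g(ψ_j(S)(X,Y)Z,W) = 2g(X,jY)S(Z,jW) + 2g(Z,jW)S(X,jY) + g(X,jZ)S(Y,jW) + g(Y,jW)S(X,jZ) - g(X,jW)S(Y,jZ) - g(Y,jZ)S(X,jW). Then ψ_j(S) satisfies the first Bianchi identity: ψ_j(S)(X,Y)Z + ψ_j(S)(Y,Z)X + ψ_j(S)(Z,X)Y = 0 for all X,Y,Z. -/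
/-- The tensor `ψ_j(S)` built from an antisymmetric bilinear form
`S` with `S(jX,jY) = -S(X,Y)` satisfies the first Bianchi identity. -/
theorem psi_first_bianchi
    (V : Type*) [AddCommGroup V] [Module ℝ V] [FiniteDimensional ℝ V]
    (n : ℕ) (hdim : Module.finrank ℝ V = 2 * n)
    (g : V →ₗ[ℝ] V →ₗ[ℝ] ℝ)
    (hnd : ∀ X : V, (∀ Y : V, g X Y = 0) → X = 0)
    (hgsym : ∀ X Y : V, g X Y = g Y X)
    (j : V →ₗ[ℝ] V) (hj : j ∘ₗ j = -LinearMap.id)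
    (hcompat : ∀ X Y : V, g (j X) (j Y) = g X Y)
    (S : V →ₗ[ℝ] V →ₗ[ℝ] ℝ)
    (hSanti : ∀ X Y : V, S X Y = -S Y X)
    (hSj : ∀ X Y : V, S (j X) (j Y) = -S X Y)
    (ψ : V → V → (V →ₗ[ℝ] V))
    (hψ : ∀ X Y Z W : V, g (ψ X Y Z) W
      = 2 * g X (j Y) * S Z (j W) + 2 * g Z (j W) * S X (j Y)
        + g X (j Z) * S Y (j W) + g Y (j W) * S X (j Z)
        - g X (j W) * S Y (j Z) - g Y (j Z) * S X (j W)) :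
    ∀ X Y Z : V, ψ X Y Z + ψ Y Z X + ψ Z X Y = 0 := by
  have hjj : ∀ Y : V, j (j Y) = -Y := by
    intro Y
    have := congrArg (fun f : V →ₗ[ℝ] V => f Y) hj
    simpa using this
  have ha : ∀ X Y : V, g X (j Y) = -g Y (j X) := by
    intro X Y
    have h1 := hcompat X (j Y)
    rw [hjj] at h1
    rw [← h1, map_neg, hgsym]
  have hswap : ∀ X Y : V, S (j X) Y = S X (j Y) := by
    intro X Y
    have h1 := hSj X (j Y)
    rw [hjj, map_neg] at h1
    linarith
  have hb : ∀ X Y : V, S X (j Y) = -S Y (j X) := by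
    intro X Y
    rw [hSanti X (j Y), hswap Y X]
  intro X Y Z
  apply hnd
  intro W
  have e : g (ψ X Y Z + ψ Y Z X + ψ Z X Y) W
      = g (ψ X Y Z) W + g (ψ Y Z X) W + g (ψ Z X Y) W := by
    simp [map_add]
  rw [e, hψ, hψ, hψ, ha Y X, ha Z X, ha Z Y, hb Y X, hb Z X, hb Z Y]
  ring
end

section
/- With the same setup, the Ricci trace of ψ_j(S) vanishes: Tr(Y ↦ ψ_j(S)(X,Y)Z) = 0 for all X, Z ∈ V. -/
/-!
Take a basis `b` of `V` and its `g`-dual basis `f`, so that `tr T = ∑ᵢ g (T fᵢ) bᵢ`. The trace of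
`Y ↦ ψ(X, Y) Z` then contracts the six terms of `ψ` against `g`. A rank-one term `α(Y) β(W)`
contracts to `β` evaluated at the `g`-dual of `α`; with `j² = -1` this gives
`2 S(Z, X) + 2 S(X, Z) - S(X, Z) + S(X, Z)`, which vanishes since `S` is antisymmetric. The
remaining terms `S(Y, jW)` and `g(Y, jW)` are antisymmetric in `(Y, W)`, and an antisymmetric form
contracts to zero against the symmetric `g`.
-/

open Finset Module
open LinearMap (BilinForm)

namespace LinearMap

theorem apply_apply_of_comp_self_eq_neg {R M : Type*} [CommRing R] [AddCommGroup M] [Module R M]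
    {j : M →ₗ[R] M} (hj : j ∘ₗ j = -id) (v : M) : j (j v) = -v := by
  simpa using congr($hj v)

namespace BilinForm

section ComplexStructure

variable {R M : Type*} [CommRing R] [AddCommGroup M] [Module R M]
  {j : M →ₗ[R] M} (hj : j ∘ₗ j = -id) {B : BilinForm R M}

include hj

theorem apply_map_right_eq_neg_of_invariant (hB : ∀ x y, B (j x) (j y) = B x y) (x y : M) :
    B x (j y) = -B (j x) y := by
  rw [← hB x (j y), apply_apply_of_comp_self_eq_neg hj, map_neg]

theorem apply_map_left_eq_apply_map_right_of_anti_invariant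
    (hB : ∀ x y, B (j x) (j y) = -B x y) (x y : M) : B (j x) y = B x (j y) := by
  rw [← neg_neg (B x (j y)), ← hB x (j y), apply_apply_of_comp_self_eq_neg hj, map_neg, neg_neg]

end ComplexStructure

section DualBasis

variable {K V ι : Type*} [Field K] [AddCommGroup V] [Module K V] [Fintype ι] [DecidableEq ι]
  {g : BilinForm K V} (hg : g.Nondegenerate) (b : Basis ι K V)

theorem apply_dualBasis_left_eq_repr (i : ι) (v : V) : g (g.dualBasis hg b i) v = b.repr v i := by
  have : g (g.dualBasis hg b i) = b.coord i :=
    b.ext fun k => by simp [apply_dualBasis_left, Finsupp.single_apply]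
  rw [this, Basis.coord_apply]

theorem trace_eq_sum_apply_dualBasis (T : V →ₗ[K] V) :
    trace K V T = ∑ i, g (T (g.dualBasis hg b i)) (b i) := by
  rw [trace_eq_matrix_trace K (g.dualBasis hg b), Matrix.trace]
  simp only [Matrix.diag_apply, LinearMap.toMatrix_apply, dualBasis_repr_apply]

theorem sum_apply_basis_mul_apply_dualBasis (w : V) (β : Dual K V) :
    ∑ i, g w (b i) * β (g.dualBasis hg b i) = β w := by
  conv_rhs => rw [← (g.dualBasis hg b).sum_repr w]
  simp only [map_sum, map_smul, smul_eq_mul, dualBasis_repr_apply]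

theorem sum_apply_dualBasis_mul_apply_basis (w : V) (α : Dual K V) :
    ∑ i, g (g.dualBasis hg b i) w * α (b i) = α w := by
  conv_rhs => rw [← b.sum_repr w]
  simp only [map_sum, map_smul, smul_eq_mul, apply_dualBasis_left_eq_repr]

theorem sum_apply_dualBasis_basis_eq_zero_of_antisymm (hK : ringChar K ≠ 2) (hgs : g.IsSymm)
    {B : BilinForm K V} (hB : ∀ x y, B x y = -B y x) :
    ∑ i, B (g.dualBasis hg b i) (b i) = 0 := by
  set f := g.dualBasis hg b
  have hexpand : ∑ i, B (f i) (b i) = ∑ i, ∑ k, g (f k) (f i) * B (b k) (b i) := by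
    refine sum_congr rfl fun i _ => ?_
    conv_lhs => rw [← b.sum_repr (f i)]
    simp only [map_sum, map_smul, LinearMap.sum_apply, LinearMap.smul_apply, smul_eq_mul,
      ← apply_dualBasis_left_eq_repr hg b, f]
  have hswap : ∑ i, ∑ k, g (f k) (f i) * B (b k) (b i)
      = -∑ i, ∑ k, g (f k) (f i) * B (b k) (b i) := by
    conv_lhs => rw [sum_comm]
    simp only [← sum_neg_distrib]
    refine sum_congr rfl fun i _ => sum_congr rfl fun k _ => ?_
    rw [hB (b i) (b k), hgs.eq (f i) (f k), mul_neg]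
  rw [hexpand, (Ring.eq_self_iff_eq_zero_of_char_ne_two hK).mp hswap.symm]

theorem sum_apply_dualBasis_map_basis_eq_zero (hK : ringChar K ≠ 2) (hgs : g.IsSymm)
    (j : V →ₗ[K] V) {B : BilinForm K V} (hB : ∀ x y, B x (j y) = -B y (j x)) :
    ∑ i, B (g.dualBasis hg b i) (j (b i)) = 0 :=
  sum_apply_dualBasis_basis_eq_zero_of_antisymm hg b hK hgs (B := B.compl₂ j) hB

variable {j : V →ₗ[K] V} (hj : j ∘ₗ j = -id) (hgj : ∀ x y, g (j x) (j y) = g x y)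
include hj hgj

theorem sum_apply_map_basis_mul_map_dualBasis (v : V) (β : Dual K V) :
    ∑ i, g v (j (b i)) * β (j (g.dualBasis hg b i)) = β v := by
  simpa [apply_map_right_eq_neg_of_invariant hj hgj, apply_apply_of_comp_self_eq_neg hj] using
    sum_apply_basis_mul_apply_dualBasis hg b (-(j v)) (β ∘ₗ j)

theorem sum_apply_map_dualBasis_mul_map_basis (hgs : g.IsSymm) (v : V) (α : Dual K V) :
    ∑ i, g v (j (g.dualBasis hg b i)) * α (j (b i)) = α v := by
  simpa [apply_map_right_eq_neg_of_invariant hj hgj, hgs.eq (j v),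
    apply_apply_of_comp_self_eq_neg hj] using
    sum_apply_dualBasis_mul_apply_basis hg b (-(j v)) (α ∘ₗ j)

end DualBasis

end BilinForm

end LinearMap

open LinearMap.BilinForm in
theorem psi_ricci_trace_zero_general
    (V : Type*) [AddCommGroup V] [Module ℝ V] [FiniteDimensional ℝ V]
    (g : V →ₗ[ℝ] V →ₗ[ℝ] ℝ)
    (hnd : ∀ X : V, (∀ Y : V, g X Y = 0) → X = 0)
    (hgsym : ∀ X Y : V, g X Y = g Y X)
    (j : V →ₗ[ℝ] V) (hj : j ∘ₗ j = -LinearMap.id)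
    (hcompat : ∀ X Y : V, g (j X) (j Y) = g X Y)
    (S : V →ₗ[ℝ] V →ₗ[ℝ] ℝ)
    (hSanti : ∀ X Y : V, S X Y = -S Y X)
    (hSj : ∀ X Y : V, S (j X) (j Y) = -S X Y)
    (ψ : V →ₗ[ℝ] V →ₗ[ℝ] V →ₗ[ℝ] V)
    (hψ : ∀ X Y Z W : V, g (ψ X Y Z) W
      = 2 * g X (j Y) * S Z (j W) + 2 * g Z (j W) * S X (j Y)
        + g X (j Z) * S Y (j W) + g Y (j W) * S X (j Z)
        - g X (j W) * S Y (j Z) - g Y (j Z) * S X (j W)) :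
    ∀ X Z : V, LinearMap.trace ℝ V ((ψ X).flip Z) = 0 := by
  intro X Z
  have hgs : LinearMap.BilinForm.IsSymm g := ⟨hgsym⟩
  have hg : g.Nondegenerate := hgs.isRefl.nondegenerate_iff_separatingLeft.mpr hnd
  have hgj := apply_map_right_eq_neg_of_invariant hj hcompat
  have hSj' := apply_map_left_eq_apply_map_right_of_anti_invariant hj hSj
  have hℝ : ringChar ℝ ≠ 2 := by simp [ringChar.eq_zero]
  set b := Module.finBasis ℝ V
  have h5 := sum_apply_map_basis_mul_map_dualBasis hg b hj hcompat X (S.flip Z)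
  have h6 := sum_apply_dualBasis_mul_apply_basis hg b (j Z) (S X ∘ₗ j)
  simp only [LinearMap.flip_apply, hSj'] at h5
  simp only [LinearMap.comp_apply, LinearMap.apply_apply_of_comp_self_eq_neg hj, map_neg] at h6
  rw [trace_eq_sum_apply_dualBasis hg b]
  simp only [LinearMap.flip_apply, hψ, sum_add_distrib, sum_sub_distrib, ← mul_sum, ← sum_mul,
    mul_assoc]
  rw [sum_apply_map_dualBasis_mul_map_basis hg b hj hcompat hgs X (S Z),
    sum_apply_map_basis_mul_map_dualBasis hg b hj hcompat Z (S X),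
    sum_apply_dualBasis_map_basis_eq_zero hg b hℝ hgs j fun x y => by rw [hSanti, hSj'],
    sum_apply_dualBasis_map_basis_eq_zero hg b hℝ hgs j fun x y => by rw [hgj, hgsym (j x)],
    h5, h6, hSanti Z X]
  ring

/-- The Ricci trace of `ψ_j(S)` vanishes:
`Tr(Y ↦ ψ_j(S)(X,Y)Z) = 0` for all `X, Z`. -/
theorem psi_ricci_trace_zero
    (V : Type*) [AddCommGroup V] [Module ℝ V] [FiniteDimensional ℝ V]
    (n : ℕ) (hdim : Module.finrank ℝ V = 2 * n)
    (g : V →ₗ[ℝ] V →ₗ[ℝ] ℝ)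
    (hnd : ∀ X : V, (∀ Y : V, g X Y = 0) → X = 0)
    (hgsym : ∀ X Y : V, g X Y = g Y X)
    (j : V →ₗ[ℝ] V) (hj : j ∘ₗ j = -LinearMap.id)
    (hcompat : ∀ X Y : V, g (j X) (j Y) = g X Y)
    (S : V →ₗ[ℝ] V →ₗ[ℝ] ℝ)
    (hSanti : ∀ X Y : V, S X Y = -S Y X)
    (hSj : ∀ X Y : V, S (j X) (j Y) = -S X Y)
    (ψ : V →ₗ[ℝ] V →ₗ[ℝ] V →ₗ[ℝ] V)
    (hψ : ∀ X Y Z W : V, g (ψ X Y Z) W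
      = 2 * g X (j Y) * S Z (j W) + 2 * g Z (j W) * S X (j Y)
        + g X (j Z) * S Y (j W) + g Y (j W) * S X (j Z)
        - g X (j W) * S Y (j Z) - g Y (j Z) * S X (j W)) :
    ∀ X Z : V, LinearMap.trace ℝ V ((ψ X).flip Z) = 0 :=
  psi_ricci_trace_zero_general V g hnd hgsym j hj hcompat S hSanti hSj ψ hψ
end

section
/- With the same setup, Tr(ψ_j(S)(X,Y)∘j) = 4(n+1)·S(X,jY) for all X, Y ∈ V. -/
/-!
Write `σ` for the `g`-dual endomorphism of `S`, i.e. `g (σ Z) W = S Z W`. Using `j² = -1`, the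
`j`-invariance of `g` and the `j`-anti-invariance of `S`, the defining formula of `ψ_j(S)(X, Y)`
shows that `ψ_j(S)(X, Y) ∘ j` is `-2 g(X, jY) σ + 2 S(X, jY) id` plus four endomorphisms of rank
at most one, each of trace `S(X, jY)`. Since `σ` is `g`-skew-adjoint its trace vanishes, so the
total trace is `2 S(X, jY) · 2n + 4 S(X, jY)`.
-/

open LinearMap

theorem LinearMap.apply_apply_of_comp_self_eq_neg_id {R M : Type*} [CommRing R] [AddCommGroup M]
    [Module R M] {j : M →ₗ[R] M} (hj : j ∘ₗ j = -LinearMap.id) (X : M) : j (j X) = -X := by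
  simpa using LinearMap.congr_fun hj X

namespace LinearMap.BilinForm

section ComplexStructure

variable {R M : Type*} [CommRing R] [AddCommGroup M] [Module R M]
  {B : LinearMap.BilinForm R M} {j : M →ₗ[R] M}

theorem apply_map_left_eq_neg_apply_map_right (hj : j ∘ₗ j = -LinearMap.id)
    (hB : ∀ X Y, B (j X) (j Y) = B X Y) (X Y : M) : B (j X) Y = -B X (j Y) := by
  have := hB X (j Y)
  rw [apply_apply_of_comp_self_eq_neg_id hj, map_neg] at this
  linear_combination -this

theorem apply_map_left_eq_apply_map_right (hj : j ∘ₗ j = -LinearMap.id)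
    (hB : ∀ X Y, B (j X) (j Y) = -B X Y) (X Y : M) : B (j X) Y = B X (j Y) := by
  have := hB X (j Y)
  rw [apply_apply_of_comp_self_eq_neg_id hj, map_neg] at this
  linear_combination -this

end ComplexStructure

variable {K V : Type*} [Field K] [AddCommGroup V] [Module K V] [FiniteDimensional K V]

section Trace

variable {B : LinearMap.BilinForm K V}

theorem trace_eq_of_isAdjointPair (hB : B.Nondegenerate) {φ ψ : V →ₗ[K] V}
    (h : IsAdjointPair B B φ ψ) : trace K V φ = trace K V ψ := by
  have hconj : (B.toDual hB).conj φ = ψ.dualMap := by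
    ext f v
    simp [LinearEquiv.conj_apply, toDual_def, h _ v]
  rw [← trace_conj' φ (B.toDual hB), hconj, dualMap_def, trace_transpose']

theorem trace_eq_zero_of_isSkewAdjoint [CharZero K] (hB : B.Nondegenerate) {φ : V →ₗ[K] V}
    (h : B.IsSkewAdjoint φ) : trace K V φ = 0 := by
  have := trace_eq_of_isAdjointPair hB (ψ := -φ) h
  rw [map_neg] at this
  exact self_eq_neg.mp this

end Trace

theorem isSkewAdjoint_symmCompOfNondegenerate {g S : LinearMap.BilinForm K V}
    (hg : g.Nondegenerate) (hgsym : g.IsSymm) (hSanti : ∀ X Y, S X Y = -S Y X) :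
    g.IsSkewAdjoint (S.symmCompOfNondegenerate g hg) := by
  intro X Y
  simp [hgsym.eq X, hSanti X Y]

end LinearMap.BilinForm

open LinearMap.BilinForm

section Psi

variable {K V : Type*} [Field K] [AddCommGroup V] [Module K V] [FiniteDimensional K V]
  {g S : LinearMap.BilinForm K V} {j : V →ₗ[K] V}

/-- `IsPsi g j S ψ` says that `ψ = ψ_j(S)`. -/
def IsPsi (g : LinearMap.BilinForm K V) (j : V →ₗ[K] V) (S : LinearMap.BilinForm K V)
    (ψ : V → V → V →ₗ[K] V) : Prop :=
  ∀ X Y Z W, g (ψ X Y Z) W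
    = 2 * g X (j Y) * S Z (j W) + 2 * g Z (j W) * S X (j Y)
      + g X (j Z) * S Y (j W) + g Y (j W) * S X (j Z)
      - g X (j W) * S Y (j Z) - g Y (j Z) * S X (j W)

theorem IsPsi.comp_eq {ψ : V → V → V →ₗ[K] V} (hψ : IsPsi g j S ψ) (hg : g.Nondegenerate)
    (hj : j ∘ₗ j = -LinearMap.id) (hgj : ∀ X Y, g (j X) (j Y) = g X Y)
    (hSj : ∀ X Y, S (j X) (j Y) = -S X Y) (X Y : V) :
    ψ X Y ∘ₗ j = (-2 * g X (j Y)) • S.symmCompOfNondegenerate g hg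
      + (2 * S X (j Y)) • LinearMap.id + (g X).smulRight (j (S.symmCompOfNondegenerate g hg Y))
      + (S X).smulRight (j Y)
      - (S Y).smulRight (j X) - (g Y).smulRight (j (S.symmCompOfNondegenerate g hg X)) := by
  ext Z
  refine ker_eq_bot.mp (separatingLeft_iff_ker_eq_bot.mp hg.1) (LinearMap.ext fun W => ?_)
  simp [hψ X Y, apply_apply_of_comp_self_eq_neg_id hj, hgj, hSj,
    apply_map_left_eq_neg_apply_map_right hj hgj _ W]
  ring

theorem IsPsi.trace_comp_eq [CharZero K] {ψ : V → V → V →ₗ[K] V} (hψ : IsPsi g j S ψ)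
    (hg : g.Nondegenerate) (hgsym : g.IsSymm) (hj : j ∘ₗ j = -LinearMap.id)
    (hgj : ∀ X Y, g (j X) (j Y) = g X Y) (hSanti : ∀ X Y, S X Y = -S Y X)
    (hSj : ∀ X Y, S (j X) (j Y) = -S X Y) (X Y : V) :
    trace K V (ψ X Y ∘ₗ j) = 2 * (Module.finrank K V + 2) * S X (j Y) := by
  have hσ (U Z : V) : g U (j (S.symmCompOfNondegenerate g hg Z)) = -S Z (j U) := by
    rw [← hgsym.eq, apply_map_left_eq_neg_apply_map_right hj hgj,
      symmCompOfNondegenerate_left_apply]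
  have hS : S Y (j X) = -S X (j Y) := by
    rw [hSanti, apply_map_left_eq_apply_map_right hj hSj]
  rw [hψ.comp_eq hg hj hgj hSj]
  simp only [map_add, map_sub, map_smul, trace_smulRight, trace_id, smul_eq_mul,
    trace_eq_zero_of_isSkewAdjoint hg (isSkewAdjoint_symmCompOfNondegenerate hg hgsym hSanti),
    hσ, hS]
  ring

end Psi

/-- `Tr(ψ_j(S)(X,Y)∘j) = 4(n+1) S(X,jY)` for all `X, Y`. -/
theorem trace_psi_comp_j
    (V : Type*) [AddCommGroup V] [Module ℝ V] [FiniteDimensional ℝ V]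
    (n : ℕ) (hdim : Module.finrank ℝ V = 2 * n)
    (g : V →ₗ[ℝ] V →ₗ[ℝ] ℝ)
    (hnd : ∀ X : V, (∀ Y : V, g X Y = 0) → X = 0)
    (hgsym : ∀ X Y : V, g X Y = g Y X)
    (j : V →ₗ[ℝ] V) (hj : j ∘ₗ j = -LinearMap.id)
    (hcompat : ∀ X Y : V, g (j X) (j Y) = g X Y)
    (S : V →ₗ[ℝ] V →ₗ[ℝ] ℝ)
    (hSanti : ∀ X Y : V, S X Y = -S Y X)
    (hSj : ∀ X Y : V, S (j X) (j Y) = -S X Y)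
    (ψ : V → V → (V →ₗ[ℝ] V))
    (hψ : ∀ X Y Z W : V, g (ψ X Y Z) W
      = 2 * g X (j Y) * S Z (j W) + 2 * g Z (j W) * S X (j Y)
        + g X (j Z) * S Y (j W) + g Y (j W) * S X (j Z)
        - g X (j W) * S Y (j Z) - g Y (j Z) * S X (j W)) :
    ∀ X Y : V, LinearMap.trace ℝ V (ψ X Y ∘ₗ j)
      = 4 * ((n : ℝ) + 1) * S X (j Y) := by
  have hg_symm : BilinForm.IsSymm g := ⟨hgsym⟩
  have hg : g.Nondegenerate := hg_symm.isRefl.nondegenerate_iff_separatingLeft.mpr hnd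
  intro X Y
  rw [IsPsi.trace_comp_eq hψ hg hg_symm hj hcompat hSanti hSj, hdim]
  push_cast
  ring
end

section
/- Let (V,Ω) be a 2n-dimensional symplectic vector space, r a symmetric bilinear form on V, ρ ∈ End(V) defined by Ω(ρX,Y) = r(X,Y). Define E(r)(X,Y) ∈ End(V) by Ω(E(r)(X,Y)Z,T) = (-1/(2(n+1)))[2Ω(X,Y)r(Z,T) + Ω(X,Z)r(Y,T) - Ω(Y,Z)r(X,T) + r(Y,Z)Ω(X,T) - r(X,Z)Ω(Y,T)]. Then E(r)(X,Y)Z + E(r)(Y,Z)X + E(r)(Z,X)Y = 0 for all X, Y, Z. -/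
/-- The symplectic Ricci-type curvature `E(r)` built from a
symmetric bilinear form `r` satisfies the first Bianchi identity. -/
theorem symplectic_E_first_bianchi
    (V : Type*) [AddCommGroup V] [Module ℝ V] [FiniteDimensional ℝ V]
    (n : ℕ) (hdim : Module.finrank ℝ V = 2 * n)
    (Ω : V →ₗ[ℝ] V →ₗ[ℝ] ℝ)
    (hnd : ∀ X : V, (∀ Y : V, Ω X Y = 0) → X = 0)
    (hΩanti : ∀ X Y : V, Ω X Y = -Ω Y X)
    (r : V →ₗ[ℝ] V →ₗ[ℝ] ℝ)
    (hrsym : ∀ X Y : V, r X Y = r Y X)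
    (E : V → V → (V →ₗ[ℝ] V))
    (hE : ∀ X Y Z T : V, Ω (E X Y Z) T
      = (-1 / (2 * ((n : ℝ) + 1)))
        * (2 * Ω X Y * r Z T + Ω X Z * r Y T - Ω Y Z * r X T
            + r Y Z * Ω X T - r X Z * Ω Y T)) :
    ∀ X Y Z : V, E X Y Z + E Y Z X + E Z X Y = 0 := by
  intro X Y Z
  have key : ∀ T : V, Ω (E X Y Z + E Y Z X + E Z X Y) T = 0 := by
    intro T
    have hadd : Ω (E X Y Z + E Y Z X + E Z X Y) T
        = Ω (E X Y Z) T + Ω (E Y Z X) T + Ω (E Z X Y) T := by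
      simp [map_add]
    rw [hadd, hE X Y Z T, hE Y Z X T, hE Z X Y T,
      hΩanti Y X, hΩanti Z Y, hΩanti Z X, hrsym Z Y, hrsym Z X, hrsym Y X]
    ring
  have := hnd _ key
  simpa using this
end

section
/- With E(r) as above, the Ricci trace recovers r: Tr(Z ↦ E(r)(X,Z)Y) = r(X,Y) for all X, Y ∈ V. -/
/-- The Ricci trace of the symplectic Ricci-type curvature `E(r)`
recovers `r`: `Tr(Z ↦ E(r)(X,Z)Y) = r(X,Y)` for all `X, Y`. -/
theorem symplectic_E_ricci_trace
    (V : Type*) [AddCommGroup V] [Module ℝ V] [FiniteDimensional ℝ V]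
    (n : ℕ) (hdim : Module.finrank ℝ V = 2 * n)
    (Ω : V →ₗ[ℝ] V →ₗ[ℝ] ℝ)
    (hnd : ∀ X : V, (∀ Y : V, Ω X Y = 0) → X = 0)
    (hΩanti : ∀ X Y : V, Ω X Y = -Ω Y X)
    (r : V →ₗ[ℝ] V →ₗ[ℝ] ℝ)
    (hrsym : ∀ X Y : V, r X Y = r Y X)
    (E : V →ₗ[ℝ] V →ₗ[ℝ] V →ₗ[ℝ] V)
    (hE : ∀ X Y Z T : V, Ω (E X Y Z) T
      = (-1 / (2 * ((n : ℝ) + 1)))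
        * (2 * Ω X Y * r Z T + Ω X Z * r Y T - Ω Y Z * r X T
            + r Y Z * Ω X T - r X Z * Ω Y T)) :
    ∀ X Y : V, LinearMap.trace ℝ V ((E X).flip Y) = r X Y := by
  -- Ω as a map to the dual is injective, hence bijective
  have hinj : Function.Injective (Ω : V →ₗ[ℝ] Module.Dual ℝ V) := by
    rw [← LinearMap.ker_eq_bot, LinearMap.ker_eq_bot']
    intro m hm
    exact hnd m (fun Y => by rw [hm]; rfl)
  have hsurj : Function.Surjective (Ω : V →ₗ[ℝ] Module.Dual ℝ V) :=
    (LinearMap.injective_iff_surjective_of_finrank_eq_finrank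
      (Subspace.dual_finrank_eq).symm).mp hinj
  set e : V ≃ₗ[ℝ] Module.Dual ℝ V := LinearEquiv.ofBijective Ω ⟨hinj, hsurj⟩ with he
  have he_apply : ∀ W : V, e W = Ω W := fun _ => rfl
  set ρ : V →ₗ[ℝ] V := e.symm.toLinearMap ∘ₗ (r : V →ₗ[ℝ] Module.Dual ℝ V) with hρdef
  have hρ : ∀ W T : V, Ω (ρ W) T = r W T := by
    intro W T
    have : Ω (ρ W) = r W := by
      have := e.apply_symm_apply (r W)
      rwa [he_apply] at this
    rw [this]
  -- trace of ρ is zero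
  have htrρ : LinearMap.trace ℝ V ρ = 0 := by
    have hconj : e.conj ρ = - (Module.Dual.transpose (R := ℝ) ρ) := by
      apply LinearMap.ext
      intro φ
      obtain ⟨W, rfl⟩ := e.surjective φ
      ext T
      have h1 : e.conj ρ (e W) = e (ρ W) := by
        simp [LinearEquiv.conj_apply]
      rw [h1, he_apply]
      have h2 : (-(Module.Dual.transpose (R := ℝ) ρ)) (e W) T = -(e W) (ρ T) := rfl
      rw [h2, he_apply, hρ W T, hΩanti W (ρ T), hρ T W, hrsym T W]
      ring
    have h3 : LinearMap.trace ℝ V ρ = LinearMap.trace ℝ _ (e.conj ρ) :=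
      (LinearMap.trace_conj' ρ e).symm
    rw [hconj,
      show -(Module.Dual.transpose (R := ℝ) ρ) = (-1 : ℝ) • Module.Dual.transpose (R := ℝ) ρ
        by ext φ T; simp,
      map_smul, LinearMap.trace_transpose', smul_eq_mul] at h3
    linarith
  intro X Y
  set c : ℝ := -1 / (2 * ((n : ℝ) + 1)) with hc
  -- the rank-one pieces
  set T1 : V →ₗ[ℝ] V := dualTensorHom ℝ V V ((Ω X) ⊗ₜ (ρ Y)) with hT1
  set T2 : V →ₗ[ℝ] V := dualTensorHom ℝ V V ((Ω Y) ⊗ₜ (ρ X)) with hT2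
  set T3 : V →ₗ[ℝ] V := dualTensorHom ℝ V V ((r Y) ⊗ₜ X) with hT3
  set F : V →ₗ[ℝ] V :=
    c • ((2 : ℝ) • T1 + (Ω X Y) • ρ + T2 + T3 - (r X Y) • LinearMap.id) with hF
  have hgF : (E X).flip Y = F := by
    apply LinearMap.ext
    intro Z
    apply hinj
    apply LinearMap.ext
    intro T
    have hL : Ω ((E X).flip Y Z) T = Ω (E X Z Y) T := rfl
    rw [hL, hE X Z Y T]
    have hR : Ω (F Z) T
        = c * ((2 : ℝ) * (Ω X Z * Ω (ρ Y) T) + Ω X Y * Ω (ρ Z) T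
            + Ω Y Z * Ω (ρ X) T + r Y Z * Ω X T - r X Y * Ω Z T) := by
      simp [hF, hT1, hT2, hT3, dualTensorHom_apply, mul_comm, mul_assoc, mul_left_comm]
    rw [hR, hρ Y T, hρ Z T, hρ X T, hrsym Z Y, hΩanti Y Z]
    ring
  rw [hgF, hF]
  have htr1 : LinearMap.trace ℝ V T1 = Ω X (ρ Y) := by
    rw [hT1, LinearMap.trace_eq_contract_apply, contractLeft_apply]
  have htr2 : LinearMap.trace ℝ V T2 = Ω Y (ρ X) := by
    rw [hT2, LinearMap.trace_eq_contract_apply, contractLeft_apply]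
  have htr3 : LinearMap.trace ℝ V T3 = r Y X := by
    rw [hT3, LinearMap.trace_eq_contract_apply, contractLeft_apply]
  have hXY : Ω X (ρ Y) = -(r X Y) := by
    rw [hΩanti X (ρ Y), hρ Y X, hrsym Y X]
  have hYX : Ω Y (ρ X) = -(r X Y) := by
    rw [hΩanti Y (ρ X), hρ X Y]
  simp only [map_add, map_sub, map_smul, smul_eq_mul, htr1, htr2, htr3, htrρ,
    LinearMap.trace_id, hdim, hXY, hYX]
  rw [hrsym Y X, hc]
  push_cast
  have hne : ((n : ℝ) + 1) ≠ 0 := by positivity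
  field_simp
  ring
end

section
/- Let (V,Ω) be a 2n-dimensional symplectic vector space, j a compatible positive complex structure, r a symmetric bilinear form on V with associated ρ ∈ End(V) given by Ω(ρX,Y) = r(X,Y), and E(r) the Ricci-type curvature built from r. Then Tr_ℝ(E(r)(X,Y)∘j) = (-1/(n+1))(Ω(X,Y)·Tr(ρ∘j) + Ω((ρ∘j + j∘ρ)X, Y)) for all X, Y ∈ V. -/
lemma trace_smulRight_aux (V : Type*) [AddCommGroup V] [Module ℝ V]
    [FiniteDimensional ℝ V] (f : V →ₗ[ℝ] ℝ) (v : V) :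
    LinearMap.trace ℝ V (f.smulRight v) = f v := by
  have h1 : f.smulRight v = (LinearMap.toSpanSingleton ℝ V v) ∘ₗ f := by
    ext z; simp [LinearMap.toSpanSingleton, LinearMap.smulRight_apply]
  rw [h1, LinearMap.trace_comp_comm']
  have h2 : f ∘ₗ (LinearMap.toSpanSingleton ℝ V v) = (f v) • LinearMap.id := by
    ext; simp [LinearMap.toSpanSingleton, mul_comm]
  rw [h2, map_smul, LinearMap.trace_id, Module.finrank_self]
  simp

/-- For the symplectic Ricci-type curvature `E(r)` and a
compatible complex structure `j`,
`Tr_ℝ(E(r)(X,Y)∘j) = (-1/(n+1))(Ω(X,Y)·Tr(ρ∘j) + Ω((ρ∘j + j∘ρ)X, Y))`. -/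
theorem trace_symplectic_E_comp_j
    (V : Type*) [AddCommGroup V] [Module ℝ V] [FiniteDimensional ℝ V]
    (n : ℕ) (hdim : Module.finrank ℝ V = 2 * n)
    (Ω : V →ₗ[ℝ] V →ₗ[ℝ] ℝ)
    (hnd : ∀ X : V, (∀ Y : V, Ω X Y = 0) → X = 0)
    (hΩanti : ∀ X Y : V, Ω X Y = -Ω Y X)
    (j : V →ₗ[ℝ] V) (hj : j ∘ₗ j = -LinearMap.id)
    (hcompat : ∀ X Y : V, Ω (j X) (j Y) = Ω X Y)
    (r : V →ₗ[ℝ] V →ₗ[ℝ] ℝ)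
    (hrsym : ∀ X Y : V, r X Y = r Y X)
    (ρ : V →ₗ[ℝ] V) (hρ : ∀ X Y : V, Ω (ρ X) Y = r X Y)
    (E : V → V → (V →ₗ[ℝ] V))
    (hE : ∀ X Y Z T : V, Ω (E X Y Z) T
      = (-1 / (2 * ((n : ℝ) + 1)))
        * (2 * Ω X Y * r Z T + Ω X Z * r Y T - Ω Y Z * r X T
            + r Y Z * Ω X T - r X Z * Ω Y T)) :
    ∀ X Y : V, LinearMap.trace ℝ V (E X Y ∘ₗ j)
      = (-1 / ((n : ℝ) + 1))
        * (Ω X Y * LinearMap.trace ℝ V (ρ ∘ₗ j) + Ω ((ρ ∘ₗ j + j ∘ₗ ρ) X) Y) := by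
  intro X Y
  have hn1 : ((n : ℝ) + 1) ≠ 0 := by positivity
  have hjj : ∀ Z : V, j (j Z) = -Z := by
    intro Z
    have := LinearMap.ext_iff.mp hj Z
    simpa using this
  have hjΩ : ∀ a b : V, Ω (j a) b = -Ω a (j b) := by
    intro a b
    have h1 : Ω (j a) (j (j b)) = Ω a (j b) := hcompat a (j b)
    rw [hjj b, map_neg] at h1
    linarith
  have hinj : ∀ A B : V, (∀ T : V, Ω A T = Ω B T) → A = B := by
    intro A B h
    have h0 : A - B = 0 := by
      apply hnd
      intro T
      simp [map_sub, h T, LinearMap.sub_apply]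
    exact sub_eq_zero.mp h0
  set c : ℝ := -1 / (2 * ((n : ℝ) + 1)) with hc
  have hF : E X Y ∘ₗ j
      = c • ((2 * Ω X Y) • (ρ ∘ₗ j)
          + ((Ω X) ∘ₗ j).smulRight (ρ Y) - ((Ω Y) ∘ₗ j).smulRight (ρ X)
          + ((r Y) ∘ₗ j).smulRight X - ((r X) ∘ₗ j).smulRight Y) := by
    apply LinearMap.ext; intro Z
    apply hinj; intro T
    simp only [LinearMap.comp_apply, LinearMap.smul_apply, LinearMap.add_apply,
      LinearMap.sub_apply, LinearMap.smulRight_apply, map_add, map_sub, map_smul,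
      smul_eq_mul]
    rw [hE]
    simp only [← hρ]
  rw [hF]
  simp only [map_smul, map_add, map_sub, LinearMap.map_smul, smul_eq_mul,
    trace_smulRight_aux]
  simp only [LinearMap.comp_apply]
  have e1 : Ω X (j (ρ Y)) = Ω (ρ (j X)) Y := by
    rw [hΩanti, hjΩ, hρ, hrsym, ← hρ]
    ring_nf
  have e2 : Ω Y (j (ρ X)) = -Ω (j (ρ X)) Y := by rw [hΩanti]
  have e3 : r Y (j X) = Ω (ρ (j X)) Y := by rw [hrsym, ← hρ]
  have e4 : r X (j Y) = -Ω (j (ρ X)) Y := by rw [hjΩ, hρ]; ring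
  rw [e1, e2, e3, e4]
  simp only [LinearMap.add_apply, LinearMap.comp_apply, map_add]
  rw [hc]
  field_simp
  ring
end

section
/- Let (V,Ω) be a symplectic vector space with compatible complex structure j, and let E(r) be the Ricci-type curvature built from a symmetric bilinear form r. Then Tr_ℝ(E(r)(jX,jY)∘j) = Tr_ℝ(E(r)(X,Y)∘j) for all X, Y ∈ V; i.e. the 2-form (X,Y) ↦ Tr(E(r)(X,Y)∘j) is of type (1,1) with respect to j. -/
/-!
Let `ρ` be the endomorphism with `Ω (ρ u) = r u`, which exists by nondegeneracy. Then `E(r)(X,Y)`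
is `-1/(2(n+1))` times a sum of `2 Ω(X,Y) ρ` and four rank-one maps, so that
`Tr(E(r)(X,Y) ∘ j)` is `-1/(2(n+1))` times `2 Ω(X,Y) Tr(ρ ∘ j) + 2 (r(Y,jX) - r(X,jY))`, because
`(x, y) ↦ Ω(x, jy)` is symmetric. Both summands are unchanged under `(X,Y) ↦ (jX,jY)`: the
first since `j` preserves `Ω`, the second since `j² = -1` and `r` is symmetric.
-/

open LinearMap Module

section

variable {K V : Type*} [Field K] [AddCommGroup V] [Module K V]

theorem LinearMap.trace_smulRight_comp [FiniteDimensional K V] (f : Dual K V) (v : V)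
    (g : V →ₗ[K] V) : trace K V (f.smulRight v ∘ₗ g) = f (g v) := by
  rw [show f.smulRight v ∘ₗ g = (f ∘ₗ g).smulRight v by ext; simp, trace_smulRight, comp_apply]

theorem apply_map_comm_of_compatible {Ω : V →ₗ[K] V →ₗ[K] K} (hΩanti : ∀ x y, Ω x y = -Ω y x)
    {j : V →ₗ[K] V} (hj : j ∘ₗ j = -LinearMap.id) (hcompat : ∀ x y, Ω (j x) (j y) = Ω x y)
    (x y : V) : Ω x (j y) = Ω y (j x) := by
  have hjj : j (j x) = -x := by simpa using LinearMap.congr_fun hj x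
  rw [← hcompat y, hjj, map_neg, hΩanti]

/-- `E(r)(A,B)` without the factor `-1/(2(n+1))`, where `ρ` is the `Ω`-dual of `r`. -/
def ricciTypeEnd (Ω r : V →ₗ[K] V →ₗ[K] K) (ρ : V →ₗ[K] V) (A B : V) : V →ₗ[K] V :=
  (2 * Ω A B) • ρ + (Ω A).smulRight (ρ B) - (Ω B).smulRight (ρ A)
    + (r B).smulRight A - (r A).smulRight B

variable {Ω r : V →ₗ[K] V →ₗ[K] K} {ρ : V →ₗ[K] V}

theorem apply_ricciTypeEnd_apply (hρ : ∀ u v, Ω (ρ u) v = r u v) (A B Z T : V) :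
    Ω (ricciTypeEnd Ω r ρ A B Z) T = 2 * Ω A B * r Z T + Ω A Z * r B T - Ω B Z * r A T
      + r B Z * Ω A T - r A Z * Ω B T := by
  simp only [ricciTypeEnd, LinearMap.add_apply, LinearMap.sub_apply, LinearMap.smul_apply,
    smulRight_apply, map_add, map_sub, map_smul, smul_eq_mul, hρ]

theorem trace_ricciTypeEnd_comp [FiniteDimensional K V] (hρ : ∀ u v, Ω (ρ u) v = r u v)
    (hΩanti : ∀ x y, Ω x y = -Ω y x) {j : V →ₗ[K] V} (hj : j ∘ₗ j = -LinearMap.id)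
    (hcompat : ∀ x y, Ω (j x) (j y) = Ω x y) (A B : V) :
    trace K V (ricciTypeEnd Ω r ρ A B ∘ₗ j)
      = 2 * Ω A B * trace K V (ρ ∘ₗ j) + 2 * (r B (j A) - r A (j B)) := by
  simp only [ricciTypeEnd, add_comp, sub_comp, smul_comp, map_add, map_sub, map_smul,
    trace_smulRight_comp, smul_eq_mul, apply_map_comm_of_compatible hΩanti hj hcompat A,
    apply_map_comm_of_compatible hΩanti hj hcompat B, hρ]
  ring

end

theorem trace_symplectic_E_j_invariant_general
    (V : Type*) [AddCommGroup V] [Module ℝ V] [FiniteDimensional ℝ V]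
    (n : ℕ)
    (Ω : V →ₗ[ℝ] V →ₗ[ℝ] ℝ)
    (hnd : ∀ X : V, (∀ Y : V, Ω X Y = 0) → X = 0)
    (hΩanti : ∀ X Y : V, Ω X Y = -Ω Y X)
    (j : V →ₗ[ℝ] V) (hj : j ∘ₗ j = -LinearMap.id)
    (hcompat : ∀ X Y : V, Ω (j X) (j Y) = Ω X Y)
    (r : V →ₗ[ℝ] V →ₗ[ℝ] ℝ)
    (hrsym : ∀ X Y : V, r X Y = r Y X)
    (E : V → V → (V →ₗ[ℝ] V))
    (hE : ∀ X Y Z T : V, Ω (E X Y Z) T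
      = (-1 / (2 * ((n : ℝ) + 1)))
        * (2 * Ω X Y * r Z T + Ω X Z * r Y T - Ω Y Z * r X T
            + r Y Z * Ω X T - r X Z * Ω Y T)) :
    ∀ X Y : V, LinearMap.trace ℝ V (E (j X) (j Y) ∘ₗ j)
      = LinearMap.trace ℝ V (E X Y ∘ₗ j) := by
  intro X Y
  have hΩ : Ω.Nondegenerate :=
    (IsRefl.nondegenerate_iff_separatingLeft fun x y h => by rw [hΩanti, h, neg_zero]).mpr hnd
  set ρ : V →ₗ[ℝ] V := (BilinForm.toDual Ω hΩ).symm.toLinearMap ∘ₗ r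
  have hρ : ∀ u v, Ω (ρ u) v = r u v := fun u v =>
    BilinForm.apply_toDual_symm_apply (hB := hΩ) _ _
  have hEρ : ∀ A B, E A B = (-1 / (2 * ((n : ℝ) + 1))) • ricciTypeEnd Ω r ρ A B := fun A B =>
    BilinForm.compLeft_injective Ω hΩ <| ext₂ fun Z T => by
      simp only [BilinForm.compLeft_apply, LinearMap.smul_apply, map_smul, smul_eq_mul, hE,
        apply_ricciTypeEnd_apply hρ]
  have hjj : ∀ x, j (j x) = -x := fun x => by simpa using LinearMap.congr_fun hj x
  simp only [hEρ, smul_comp, map_smul, trace_ricciTypeEnd_comp hρ hΩanti hj hcompat, hcompat, hjj,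
    map_neg, hrsym (j Y) X, hrsym (j X) Y]
  ring

/-- For the symplectic Ricci-type curvature `E(r)` and a
compatible complex structure `j`, the 2-form `(X,Y) ↦ Tr(E(r)(X,Y)∘j)` is of
type `(1,1)`: `Tr_ℝ(E(r)(jX,jY)∘j) = Tr_ℝ(E(r)(X,Y)∘j)` for all `X, Y`. -/
theorem trace_symplectic_E_j_invariant
    (V : Type*) [AddCommGroup V] [Module ℝ V] [FiniteDimensional ℝ V]
    (n : ℕ) (hdim : Module.finrank ℝ V = 2 * n)
    (Ω : V →ₗ[ℝ] V →ₗ[ℝ] ℝ)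
    (hnd : ∀ X : V, (∀ Y : V, Ω X Y = 0) → X = 0)
    (hΩanti : ∀ X Y : V, Ω X Y = -Ω Y X)
    (j : V →ₗ[ℝ] V) (hj : j ∘ₗ j = -LinearMap.id)
    (hcompat : ∀ X Y : V, Ω (j X) (j Y) = Ω X Y)
    (r : V →ₗ[ℝ] V →ₗ[ℝ] ℝ)
    (hrsym : ∀ X Y : V, r X Y = r Y X)
    (E : V → V → (V →ₗ[ℝ] V))
    (hE : ∀ X Y Z T : V, Ω (E X Y Z) T
      = (-1 / (2 * ((n : ℝ) + 1)))
        * (2 * Ω X Y * r Z T + Ω X Z * r Y T - Ω Y Z * r X T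
            + r Y Z * Ω X T - r X Z * Ω Y T)) :
    ∀ X Y : V, LinearMap.trace ℝ V (E (j X) (j Y) ∘ₗ j)
      = LinearMap.trace ℝ V (E X Y ∘ₗ j) :=
  trace_symplectic_E_j_invariant_general V n Ω hnd hΩanti j hj hcompat r hrsym E hE
end
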